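/- Let F be any class of frames, let φ be a modal formula built from propositional variables, atomic negation, ∧, □, ◇, and the constants true and false, and let t and f be propositional variables not occurring in φ. Define g(φ) = φ[true := t, false := f] ∧ ⋀_{i=0}^{md(φ)} □^i(t ∧ f̄), where φ[true := t, false := f] replaces every occurrence of the constant true by t and every occurrence of the constant false by f. Then φ is satisfiable with respect to F if and only if g(φ) is satisfiable with respect to F. -/
import Mathlib


namespace PoorMansModal

/-- Modal formulas over propositional variables of type `α`: variables `p`,
negated variables `p̄`, general negation, conjunction, disjunction, box, diamond,
and the constants `true` and `false`. -/
inductive Fml (α : Type) : Type where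
  | var : α → Fml α
  | nvar : α → Fml α
  | neg : Fml α → Fml α
  | and : Fml α → Fml α → Fml α
  | or : Fml α → Fml α → Fml α
  | box : Fml α → Fml α
  | dia : Fml α → Fml α
  | tru : Fml α
  | fls : Fml α

/-- A Kripke model: a nonempty set of worlds, an accessibility relation, and a valuation. -/
structure Kripke (α : Type) where
  World : Type
  nonempty : Nonempty World
  R : World → World → Prop
  V : α → World → Prop

/-- Truth of a formula at a world of a model. -/
def Sat {α : Type} (M : Kripke α) : Fml α → M.World → Prop
  | .var p, w => M.V p w
  | .nvar p, w => ¬ M.V p w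
  | .neg φ, w => ¬ Sat M φ w
  | .and φ ψ, w => Sat M φ w ∧ Sat M ψ w
  | .or φ ψ, w => Sat M φ w ∨ Sat M ψ w
  | .box φ, w => ∀ v, M.R w v → Sat M φ v
  | .dia φ, w => ∃ v, M.R w v ∧ Sat M φ v
  | .tru, _ => True
  | .fls, _ => False

/-- Modal depth: depth of nesting of `□` and `◇`. -/
def mdep {α : Type} : Fml α → ℕ
  | .var _ => 0
  | .nvar _ => 0
  | .neg φ => mdep φ
  | .and φ ψ => max (mdep φ) (mdep ψ)
  | .or φ ψ => max (mdep φ) (mdep ψ)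
  | .box φ => mdep φ + 1
  | .dia φ => mdep φ + 1
  | .tru => 0
  | .fls => 0

/-- Conjunction of a list of formulas; the empty conjunction is the always-true formula. -/
def bigConj {α : Type} : List (Fml α) → Fml α
  | [] => .tru
  | [φ] => φ
  | φ :: rest => .and φ (bigConj rest)

/-- `□^k φ`. -/
def boxI {α : Type} : ℕ → Fml α → Fml α
  | 0, φ => φ
  | k + 1, φ => .box (boxI k φ)

/-- `◇^k φ`. -/
def diaI {α : Type} : ℕ → Fml α → Fml α
  | 0, φ => φ
  | k + 1, φ => .dia (diaI k φ)

/-- `(◇□)^k φ`. -/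
def diaBoxI {α : Type} : ℕ → Fml α → Fml α
  | 0, φ => φ
  | k + 1, φ => .dia (.box (diaBoxI k φ))

/-- The literal with variable `l.1` and sign `l.2` (`true` = positive). -/
def litF {α : Type} (l : α × Bool) : Fml α := if l.2 then .var l.1 else .nvar l.1

/-- The variable `p` occurs in the formula. -/
def occursV {α : Type} (p : α) : Fml α → Prop
  | .var q => p = q
  | .nvar q => p = q
  | .neg φ => occursV p φ
  | .and φ ψ => occursV p φ ∨ occursV p ψ
  | .or φ ψ => occursV p φ ∨ occursV p ψ
  | .box φ => occursV p φ
  | .dia φ => occursV p φ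
  | .tru => False
  | .fls => False

/-- Poor man's formulas: built from literals, `∧`, `□`, `◇` only. -/
def PoorF {α : Type} : Fml α → Prop
  | .var _ => True
  | .nvar _ => True
  | .and φ ψ => PoorF φ ∧ PoorF ψ
  | .box φ => PoorF φ
  | .dia φ => PoorF φ
  | _ => False

/-- Formulas of the language `L`: built from literals, `∧`, `∨`, `□`, `◇`. -/
def InL {α : Type} : Fml α → Prop
  | .var _ => True
  | .nvar _ => True
  | .and φ ψ => InL φ ∧ InL ψ
  | .or φ ψ => InL φ ∧ InL ψ
  | .box φ => InL φ
  | .dia φ => InL φ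
  | _ => False

/-- Every world has at most one successor. -/
def AtMostOne {W : Type} (R : W → W → Prop) : Prop :=
  ∀ w v v', R w v → R w v' → v = v'

/-- Every world has at least one successor. -/
def AtLeastOne {W : Type} (R : W → W → Prop) : Prop :=
  ∀ w, ∃ v, R w v

/-- Every world has at most two successors. -/
def AtMostTwo {W : Type} (R : W → W → Prop) : Prop :=
  ∀ w v₁ v₂ v₃, R w v₁ → R w v₂ → R w v₃ → v₁ = v₂ ∨ v₁ = v₃ ∨ v₂ = v₃

/-- `chainR R n w v`: there is an `R`-path of length exactly `n` from `w` to `v`. -/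
def chainR {W : Type} (R : W → W → Prop) : ℕ → W → W → Prop
  | 0, w, v => w = v
  | k + 1, w, v => ∃ u, R w u ∧ chainR R k u v

/-- `R` is the parent-child relation of a rooted tree with root `root`
in which every node has at most two children. -/
structure IsBinTree {W : Type} (R : W → W → Prop) (root : W) : Prop where
  reach : ∀ w, Relation.ReflTransGen R root w
  root_no_parent : ∀ w, ¬ R w root
  unique_parent : ∀ w v v', R v w → R v' w → v = v'
  acyclic : ∀ w, ¬ Relation.TransGen R w w
  at_most_two_children : ∀ w v₁ v₂ v₃, R w v₁ → R w v₂ → R w v₃ → v₁ = v₂ ∨ v₁ = v₃ ∨ v₂ = v₃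

/-- `φ_exp = ⋀_{i=1}^n □^{i-1}(◇□^{n-i} p_i ∧ ◇□^{n-i} p̄_i)`, with `p_i = var i`. -/
def phiExp (n : ℕ) : Fml ℕ :=
  bigConj ((List.range n).map (fun j =>
    boxI j (.and (.dia (boxI (n - 1 - j) (.var (j + 1))))
                 (.dia (boxI (n - 1 - j) (.nvar (j + 1)))))))

/-- Satisfiability with respect to the class of all frames. -/
def SatAll (φ : Fml ℕ) : Prop := ∃ (M : Kripke ℕ) (w : M.World), Sat M φ w

/-- Satisfiability with respect to `F≤1`. -/
def SatLe1 (φ : Fml ℕ) : Prop := ∃ M : Kripke ℕ, AtMostOne M.R ∧ ∃ w, Sat M φ w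

/-- Satisfiability with respect to `F≥1`. -/
def SatGe1 (φ : Fml ℕ) : Prop := ∃ M : Kripke ℕ, AtLeastOne M.R ∧ ∃ w, Sat M φ w

/-- Satisfiability with respect to `F≤2`. -/
def SatLe2 (φ : Fml ℕ) : Prop := ∃ M : Kripke ℕ, AtMostTwo M.R ∧ ∃ w, Sat M φ w

/-- A one-world model with no successors, realizing the boolean assignment `v`;
truth at its world is propositional truth for formulas without modal operators. -/
def propModel (v : ℕ → Bool) : Kripke ℕ :=
  { World := Unit, nonempty := ⟨()⟩, R := fun _ _ => False, V := fun p _ => v p = true }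

/-- Propositional satisfaction of `φ` under the assignment `v`. -/
def PropSat (v : ℕ → Bool) (φ : Fml ℕ) : Prop := Sat (propModel v) φ ()


/-- Formulas built from variables, atomic negation, `∧`, `□`, `◇`, and the constants
`true` and `false`. -/
def Frag16 : Fml ℕ → Prop
  | .var _ => True
  | .nvar _ => True
  | .and φ ψ => Frag16 φ ∧ Frag16 ψ
  | .box φ => Frag16 φ
  | .dia φ => Frag16 φ
  | .tru => True
  | .fls => True
  | _ => False

/-- `φ[true := t, false := f]`: replace every occurrence of the constant `true` by the
variable `t` and every occurrence of the constant `false` by the variable `f`. -/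
def substTF (t f : ℕ) : Fml ℕ → Fml ℕ
  | .tru => .var t
  | .fls => .var f
  | .neg φ => .neg (substTF t f φ)
  | .and φ ψ => .and (substTF t f φ) (substTF t f ψ)
  | .or φ ψ => .or (substTF t f φ) (substTF t f ψ)
  | .box φ => .box (substTF t f φ)
  | .dia φ => .dia (substTF t f φ)
  | a => a

lemma sat_bigConj (M : Kripke ℕ) (l : List (Fml ℕ)) (w : M.World) :
    Sat M (bigConj l) w ↔ ∀ ψ ∈ l, Sat M ψ w := by
  induction l with
  | nil => simp [bigConj, Sat]
  | cons a l ih =>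
    cases l with
    | nil => simp [bigConj]
    | cons b l =>
      show Sat M (.and a (bigConj (b :: l))) w ↔ _
      simp only [Sat, ih, List.mem_cons]
      constructor
      · rintro ⟨h1, h2⟩ ψ (rfl | h) <;> [exact h1; exact h2 _ h]
      · intro h; exact ⟨h a (Or.inl rfl), fun ψ h' => h ψ (Or.inr h')⟩

lemma sat_boxI (M : Kripke ℕ) (k : ℕ) (ψ : Fml ℕ) (w : M.World) :
    Sat M (boxI k ψ) w ↔ ∀ v, chainR M.R k w v → Sat M ψ v := by
  induction k generalizing w with
  | zero =>
    simp only [boxI, chainR]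
    constructor
    · rintro h v rfl; exact h
    · intro h; exact h w rfl
  | succ k ih =>
    show Sat M (.box (boxI k ψ)) w ↔ _
    simp only [Sat, ih, chainR]
    constructor
    · rintro h v ⟨u, hu, hc⟩; exact h u hu v hc
    · intro h u hu v hc; exact h v ⟨u, hu, hc⟩

lemma sat_congrV (W : Type) (ne : Nonempty W) (R : W → W → Prop)
    (V V' : ℕ → W → Prop) (ψ : Fml ℕ)
    (h : ∀ p w, occursV p ψ → (V p w ↔ V' p w)) (w : W) :
    Sat ⟨W, ne, R, V⟩ ψ w ↔ Sat ⟨W, ne, R, V'⟩ ψ w := by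
  induction ψ generalizing w with
  | var p => exact h p w rfl
  | nvar p => exact not_congr (h p w rfl)
  | neg φ ih => exact not_congr (ih (fun p w hp => h p w hp) w)
  | and φ₁ φ₂ ih1 ih2 =>
    exact and_congr (ih1 (fun p w hp => h p w (Or.inl hp)) w)
      (ih2 (fun p w hp => h p w (Or.inr hp)) w)
  | or φ₁ φ₂ ih1 ih2 =>
    exact or_congr (ih1 (fun p w hp => h p w (Or.inl hp)) w)
      (ih2 (fun p w hp => h p w (Or.inr hp)) w)
  | box φ ih =>
    exact forall_congr' fun v => imp_congr_right fun _ => ih (fun p w hp => h p w hp) v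
  | dia φ ih =>
    exact exists_congr fun v => and_congr_right fun _ => ih (fun p w hp => h p w hp) v
  | tru => exact Iff.rfl
  | fls => exact Iff.rfl

lemma sat_substTF (M : Kripke ℕ) (t f : ℕ) (ψ : Fml ℕ) (hψ : Frag16 ψ) (w : M.World)
    (H : ∀ k ≤ mdep ψ, ∀ v, chainR M.R k w v → M.V t v ∧ ¬ M.V f v) :
    Sat M (substTF t f ψ) w ↔ Sat M ψ w := by
  induction ψ generalizing w with
  | var p => exact Iff.rfl
  | nvar p => exact Iff.rfl
  | neg φ ih => exact absurd hψ (by simp [Frag16])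
  | or φ₁ φ₂ ih1 ih2 => exact absurd hψ (by simp [Frag16])
  | and φ₁ φ₂ ih1 ih2 =>
    have h1 := ih1 hψ.1 w (fun k hk => H k (le_trans hk (le_max_left _ _)))
    have h2 := ih2 hψ.2 w (fun k hk => H k (le_trans hk (le_max_right _ _)))
    exact and_congr h1 h2
  | box φ ih =>
    refine forall_congr' fun v => imp_congr_right fun hv => ih hψ v ?_
    intro k hk u hc
    exact H (k + 1) (Nat.succ_le_succ hk) u ⟨v, hv, hc⟩
  | dia φ ih =>
    refine exists_congr fun v => and_congr_right fun hv => ih hψ v ?_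
    intro k hk u hc
    exact H (k + 1) (Nat.succ_le_succ hk) u ⟨v, hv, hc⟩
  | tru =>
    have := (H 0 (le_refl 0) w rfl).1
    simp only [substTF, Sat]
    exact iff_of_true this trivial
  | fls =>
    have := (H 0 (le_refl 0) w rfl).2
    simp only [substTF, Sat]
    exact iff_of_false this (fun h => h)

/-- For any class of frames `C`, a formula `φ` built from variables,
atomic negation, `∧`, `□`, `◇`, `true`, `false`, and fresh variables `t` and `f`, `φ` is
satisfiable with respect to `C` iff
`g(φ) = φ[true := t, false := f] ∧ ⋀_{i=0}^{md(φ)} □^i (t ∧ f̄)` is satisfiable with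
respect to `C`. -/
theorem stmt16 (C : ∀ W : Type, (W → W → Prop) → Prop)
    (φ : Fml ℕ) (hφ : Frag16 φ) (t f : ℕ) (htf : t ≠ f)
    (ht : ¬ occursV t φ) (hf : ¬ occursV f φ) :
    (∃ M : Kripke ℕ, C M.World M.R ∧ ∃ w, Sat M φ w) ↔
      (∃ M : Kripke ℕ, C M.World M.R ∧ ∃ w,
        Sat M (.and (substTF t f φ)
          (bigConj ((List.range (mdep φ + 1)).map
            (fun i => boxI i (.and (.var t) (.nvar f)))))) w) := by
  constructor
  · rintro ⟨M, hC, w, hw⟩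
    set V' : ℕ → M.World → Prop :=
      fun p => if p = t then fun _ => True else if p = f then fun _ => False else M.V p
      with hV'
    refine ⟨⟨M.World, M.nonempty, M.R, V'⟩, hC, w, ?_, ?_⟩
    · have hagree : ∀ p w', occursV p φ → (M.V p w' ↔ V' p w') := by
        intro p w' hp
        have hpt : p ≠ t := fun h => ht (h ▸ hp)
        have hpf : p ≠ f := fun h => hf (h ▸ hp)
        simp [hV', hpt, hpf]
      have hs : Sat ⟨M.World, M.nonempty, M.R, V'⟩ φ w :=
        (sat_congrV M.World M.nonempty M.R M.V V' φ hagree w).mp hw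
      exact (sat_substTF ⟨M.World, M.nonempty, M.R, V'⟩ t f φ hφ w
        (fun k _ v _ => by simp [hV', (Ne.symm htf : f ≠ t)])).mpr hs
    · rw [sat_bigConj]
      intro ψ hψ'
      simp only [List.mem_map, List.mem_range] at hψ'
      obtain ⟨i, _, rfl⟩ := hψ'
      rw [sat_boxI]
      intro v _
      refine ⟨?_, ?_⟩ <;> simp [Sat, hV', (Ne.symm htf : f ≠ t)]
  · rintro ⟨M, hC, w, h1, h2⟩
    refine ⟨M, hC, w, ?_⟩
    have H : ∀ k ≤ mdep φ, ∀ v, chainR M.R k w v → M.V t v ∧ ¬ M.V f v := by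
      intro k hk v hc
      have hmem : boxI k (Fml.and (.var t) (.nvar f)) ∈
          (List.range (mdep φ + 1)).map (fun i => boxI i (.and (.var t) (.nvar f))) :=
        List.mem_map.mpr ⟨k, List.mem_range.mpr (Nat.lt_succ_of_le hk), rfl⟩
      have hb := (sat_bigConj M _ w).mp h2 _ hmem
      exact (sat_boxI M k _ w).mp hb v hc
    exact (sat_substTF M t f φ hφ w H).mp h1

end PoorMansModal
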